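/- arXiv:1905.12744 — 2 statements merged into one kernel-verified Lean document; each statement's English description precedes it below -/
import Mathlib

section
/- Let k ≥ 1 be an integer, ε > 0, and δ ∈ (0,1). Let x_1, …, x_k be nonnegative real numbers (the true counts) with n = Σ_{i=1}^k x_i > 0. Let L_1, …, L_k be independent random variables, each Laplace-distributed with location 0 and scale 1/ε, and set x̃_i = x_i + L_i and ñ = Σ_{i=1}^k x̃_i. Define the slack variables Δ = ln(2k/δ)/ε and Δ' = k·ln(2k²/δ)/ε. Then with probability at least 1 − δ, simultaneously for every index i ∈ {1,…,k}: x_i · (ñ − Δ') ≤ n · (x̃_i + Δ). (Equivalently, whenever ñ − Δ' > 0, the inflated allocation share (x̃_i + Δ)/(ñ − Δ') is at least the true allocation share x_i/n for every i, so the inflationary repair algorithm is a no-penalty allocation with failure probability at most δ.) -/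
/-!
With probability at least `1 - δ/2` every noise term satisfies `|L i| ≤ Δ`: a
Laplace(0, 1/ε) variable exceeds `Δ` in absolute value with probability `exp (-ε Δ) = δ/(2k)`,
and a union bound over the `k` districts suffices. On that event
`ñ - Δ' ≤ n + kΔ - Δ' ≤ n` (because `Δ ≤ Δ'/k`) while `x̃ i + Δ ≥ x i`, which gives the
inequality for every district at once.
-/

open MeasureTheory ProbabilityTheory

/-- The Laplace distribution with location 0 and scale `b`, as the measure on `ℝ`
with density `(1/(2b)) · exp (−|t|/b)` with respect to Lebesgue measure. -/
noncomputable def laplaceMeasure (b : ℝ) : Measure ℝ :=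
  MeasureTheory.volume.withDensity
    (fun t => ENNReal.ofReal ((1 / (2 * b)) * Real.exp (-|t| / b)))

open Set Real

lemma laplaceMeasure_Ioi {b : ℝ} (hb : 0 < b) {a : ℝ} (ha : 0 ≤ a) :
    laplaceMeasure b (Ioi a) = ENNReal.ofReal (exp (-a / b) / 2) := by
  have hdensity : EqOn (fun t => ENNReal.ofReal (1 / (2 * b) * exp (-|t| / b)))
      (fun t => ENNReal.ofReal (1 / (2 * b) * exp (-b⁻¹ * t))) (Ioi a) := by
    intro t ht
    dsimp only
    rw [abs_of_pos (ha.trans_lt ht)]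
    ring_nf
  have hint : IntegrableOn (fun t => 1 / (2 * b) * exp (-b⁻¹ * t)) (Ioi a) :=
    (integrableOn_exp_mul_Ioi (by simpa using hb) a).const_mul _
  rw [laplaceMeasure, withDensity_apply _ measurableSet_Ioi,
    setLIntegral_congr_fun measurableSet_Ioi hdensity,
    ← ofReal_integral_eq_lintegral_ofReal hint (.of_forall fun t => by positivity),
    integral_const_mul, integral_exp_mul_Ioi (by simpa using hb)]
  congr 1
  field_simp

lemma laplaceMeasure_preimage_neg (b : ℝ) (s : Set ℝ) :
    laplaceMeasure b (Neg.neg ⁻¹' s) = laplaceMeasure b s := by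
  rw [laplaceMeasure, withDensity_apply', withDensity_apply',
    ← (Measure.measurePreserving_neg volume).setLIntegral_comp_preimage_emb
      (Homeomorph.neg ℝ).measurableEmbedding]
  simp

lemma laplaceMeasure_abs_gt {b : ℝ} (hb : 0 < b) {a : ℝ} (ha : 0 ≤ a) :
    laplaceMeasure b {t | a < |t|} = ENNReal.ofReal (exp (-a / b)) := by
  have hsplit : {t : ℝ | a < |t|} = Neg.neg ⁻¹' Ioi a ∪ Ioi a := by
    ext t
    simp [lt_abs, lt_neg, or_comm]
  have hdisj : Disjoint (Neg.neg ⁻¹' Ioi a) (Ioi a) := by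
    rw [Set.disjoint_left]
    intro t h1 h2
    simp only [mem_preimage, mem_Ioi] at h1 h2
    linarith
  rw [hsplit, measure_union hdisj measurableSet_Ioi, laplaceMeasure_preimage_neg,
    laplaceMeasure_Ioi hb ha, ← ENNReal.ofReal_add (by positivity) (by positivity)]
  ring_nf

lemma laplaceMeasure_abs_gt_le {b : ℝ} (hb : 0 < b) (a : ℝ) :
    laplaceMeasure b {t | a < |t|} ≤ ENNReal.ofReal (exp (-a / b)) := by
  rcases le_or_gt 0 a with ha | ha
  · exact (laplaceMeasure_abs_gt hb ha).le
  have hnull : laplaceMeasure b {0} = 0 :=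
    withDensity_absolutelyContinuous _ _ Real.volume_singleton
  calc laplaceMeasure b {t | a < |t|}
      ≤ laplaceMeasure b ({t | 0 < |t|} ∪ {0}) := by
        refine measure_mono fun t _ => ?_
        rcases eq_or_ne t 0 with rfl | ht
        · exact Or.inr rfl
        · exact Or.inl (abs_pos.mpr ht)
    _ ≤ ENNReal.ofReal (exp (-0 / b)) := by
        refine (measure_union_le _ _).trans ?_
        rw [hnull, add_zero, laplaceMeasure_abs_gt hb le_rfl]
    _ ≤ ENNReal.ofReal (exp (-a / b)) := by gcongr

lemma measure_abs_gt_le_of_map_eq_laplaceMeasure {Ω : Type*} [MeasurableSpace Ω]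
    {μ : Measure Ω} {X : Ω → ℝ} (hX : Measurable X) {b : ℝ} (hb : 0 < b)
    (hXμ : μ.map X = laplaceMeasure b) (a : ℝ) :
    μ {ω | a < |X ω|} ≤ ENNReal.ofReal (exp (-a / b)) := by
  calc μ {ω | a < |X ω|} = μ.map X {t | a < |t|} :=
        (Measure.map_apply hX (measurableSet_lt measurable_const measurable_abs)).symm
    _ ≤ _ := hXμ ▸ laplaceMeasure_abs_gt_le hb a

lemma measure_univ_le_measure_iInter_add_sum_compl {Ω ι : Type*} [MeasurableSpace Ω]
    [Fintype ι] (μ : Measure Ω) (s : ι → Set Ω) : μ univ ≤ μ (⋂ i, s i) + ∑ i, μ (s i)ᶜ :=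
  calc μ univ ≤ μ (⋂ i, s i) + μ (⋂ i, s i)ᶜ := measure_univ_le_add_compl _
    _ ≤ μ (⋂ i, s i) + ∑ i, μ (s i)ᶜ := by
      rw [compl_iInter]
      gcongr
      exact measure_iUnion_fintype_le μ _

lemma mul_sum_add_sub_le_sum_mul_add {ι : Type*} [Fintype ι] {x L : ι → ℝ} (hx : ∀ i, 0 ≤ x i)
    {D Δ' : ℝ} (hL : ∀ j, |L j| ≤ D) (hΔ' : Fintype.card ι * D ≤ Δ') (i : ι) :
    x i * (∑ j, (x j + L j) - Δ') ≤ (∑ j, x j) * (x i + L i + D) := by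
  have hsum : ∑ j, L j ≤ Fintype.card ι * D := by
    simpa using Finset.sum_le_sum fun j (_ : j ∈ Finset.univ) => (le_abs_self (L j)).trans (hL j)
  have hLi : 0 ≤ L i + D := neg_le_iff_add_nonneg.mp (neg_le_of_abs_le (hL i))
  calc x i * (∑ j, (x j + L j) - Δ') ≤ x i * ∑ j, x j := by
        rw [Finset.sum_add_distrib]
        exact mul_le_mul_of_nonneg_left (by linarith) (hx i)
    _ ≤ (∑ j, x j) * (x i + L i + D) := by
        rw [mul_comm]
        exact mul_le_mul_of_nonneg_left (by linarith) (Finset.sum_nonneg fun j _ => hx j)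

theorem no_penalty_allocation_general
    {Ω : Type*} [MeasurableSpace Ω] (μ : Measure Ω) [IsProbabilityMeasure μ]
    (k : ℕ) (hk : 1 ≤ k) (ε δ : ℝ) (hε : 0 < ε) (hδ0 : 0 < δ)
    (x : Fin k → ℝ) (hx : ∀ i, 0 ≤ x i)
    (L : Fin k → Ω → ℝ) (hL : ∀ i, Measurable (L i))
    (hmap : ∀ i, μ.map (L i) = laplaceMeasure (1 / ε)) :
    ENNReal.ofReal (1 - δ) ≤
      μ {ω | ∀ i : Fin k,
        x i * ((∑ j, (x j + L j ω)) - (k : ℝ) * Real.log (2 * (k : ℝ) ^ 2 / δ) / ε)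
          ≤ (∑ j, x j) * ((x i + L i ω) + Real.log (2 * (k : ℝ) / δ) / ε)} := by
  set D := Real.log (2 * (k : ℝ) / δ) / ε
  have hk0 : (0 : ℝ) < k := by exact_mod_cast hk
  have hslack : Fintype.card (Fin k) * D ≤ (k : ℝ) * Real.log (2 * (k : ℝ) ^ 2 / δ) / ε := by
    rw [Fintype.card_fin, mul_div_assoc]
    gcongr
    simp only [D]
    gcongr
    exact le_self_pow₀ (by exact_mod_cast hk) two_ne_zero
  have htail : ∀ i, μ {ω | |L i ω| ≤ D}ᶜ ≤ ENNReal.ofReal (δ / (2 * k)) := by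
    intro i
    simp only [compl_ofPred, not_le]
    refine (measure_abs_gt_le_of_map_eq_laplaceMeasure (hL i) (by positivity) (hmap i) D).trans_eq ?_
    have hD : -D / (1 / ε) = -Real.log (2 * k / δ) := by
      simp only [D]
      field_simp
    rw [hD, Real.exp_neg, Real.exp_log (by positivity), inv_div]
  have hsum : ∑ _i : Fin k, ENNReal.ofReal (δ / (2 * k)) ≤ ENNReal.ofReal δ := by
    rw [Finset.sum_const, Finset.card_univ, Fintype.card_fin, nsmul_eq_mul,
      ← ENNReal.ofReal_natCast, ← ENNReal.ofReal_mul hk0.le]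
    gcongr
    field_simp
    linarith
  calc ENNReal.ofReal (1 - δ) = 1 - ENNReal.ofReal δ := by
        rw [ENNReal.ofReal_sub 1 hδ0.le, ENNReal.ofReal_one]
    _ ≤ 1 - ∑ i, μ {ω | |L i ω| ≤ D}ᶜ := by
        gcongr
        exact (Finset.sum_le_sum fun i _ => htail i).trans hsum
    _ ≤ μ (⋂ i, {ω | |L i ω| ≤ D}) := by
        rw [tsub_le_iff_right, ← measure_univ (μ := μ)]
        exact measure_univ_le_measure_iInter_add_sum_compl μ _
    _ ≤ _ := by
        refine measure_mono fun ω hω i => ?_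
        simp only [mem_iInter] at hω
        exact mul_sum_add_sub_le_sum_mul_add hx hω hslack i

/-- the inflationary repair algorithm is a no-penalty allocation.
With `x̃ i = x i + L i` (independent Laplace(0,1/ε) noise), `ñ = Σ x̃ i`,
`Δ = ln(2k/δ)/ε` and `Δ' = k·ln(2k²/δ)/ε`, with probability at least `1 − δ`,
simultaneously for every `i`: `x i · (ñ − Δ') ≤ n · (x̃ i + Δ)`. -/
theorem no_penalty_allocation
    {Ω : Type*} [MeasurableSpace Ω] (μ : Measure Ω) [IsProbabilityMeasure μ]
    (k : ℕ) (hk : 1 ≤ k) (ε δ : ℝ) (hε : 0 < ε) (hδ0 : 0 < δ) (hδ1 : δ < 1)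
    (x : Fin k → ℝ) (hx : ∀ i, 0 ≤ x i) (hn : 0 < ∑ i, x i)
    (L : Fin k → Ω → ℝ) (hL : ∀ i, Measurable (L i))
    (hindep : iIndepFun L μ)
    (hmap : ∀ i, μ.map (L i) = laplaceMeasure (1 / ε)) :
    ENNReal.ofReal (1 - δ) ≤
      μ {ω | ∀ i : Fin k,
        x i * ((∑ j, (x j + L j ω)) - (k : ℝ) * Real.log (2 * (k : ℝ) ^ 2 / δ) / ε)
          ≤ (∑ j, x j) * ((x i + L i ω) + Real.log (2 * (k : ℝ) / δ) / ε)} :=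
  no_penalty_allocation_general μ k hk ε δ hε hδ0 x hx L hL hmap
end

section
/- Let 0 ≤ x_a ≤ x_b be real numbers, let ε > 0, and let Z_a, Z_b be independent identically distributed random variables each with the Laplace distribution of location 0 and scale 1/ε. Let S be a random variable independent of (Z_a, Z_b) with S > 0 almost surely and S ≥ 0. Define the rounded noisy counts Y_a = max(x_a + Z_a, 0) and Y_b = max(x_b + Z_b, 0). Then E[Y_a / (Y_a + Y_b + S)] ≤ E[Y_b / (Y_a + Y_b + S)]. That is, under the Laplace mechanism with rounding of negative counts to zero, in expectation a district with fewer eligible students receives an allocation share no larger than that of a district with more eligible students. -/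
/-!
Independence makes `((Za, Zb), S)` and `((Zb, Za), S)` identically distributed, so swapping the
noise of the two districts does not change expected shares. Averaging the original and the swapped
configuration reduces the claim to a pointwise inequality: with `A = (xa + Za)⁺`, `B = (xb + Zb)⁺`,
`C = (xa + Zb)⁺`, `D = (xb + Za)⁺` we have `A ≤ D` and `C ≤ B`, and then for `s = S > 0`
`A / (A + B + s) + C / (C + D + s) ≤ B / (A + B + s) + D / (C + D + s)`.
-/

open MeasureTheory ProbabilityTheory

lemma div_add_div_le_div_add_div_of_le {a b c d s : ℝ} (ha : 0 ≤ a) (hc : 0 ≤ c) (had : a ≤ d)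
    (hcb : c ≤ b) (hs : 0 < s) :
    a / (a + b + s) + c / (c + d + s) ≤ b / (a + b + s) + d / (c + d + s) := by
  have hP : 0 < a + b + s := by linarith
  have hQ : 0 < c + d + s := by linarith
  rw [div_add_div _ _ hP.ne' hQ.ne', div_add_div _ _ hP.ne' hQ.ne',
    div_le_div_iff_of_pos_right (by positivity)]
  nlinarith [mul_le_mul had hcb hc (ha.trans had), mul_nonneg hs.le (sub_nonneg.2 hcb),
    mul_nonneg hs.le (sub_nonneg.2 had)]

lemma abs_div_le_one_of_le {a b : ℝ} (ha : 0 ≤ a) (hab : a ≤ b) : |a / b| ≤ 1 := by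
  rw [abs_of_nonneg (div_nonneg ha (ha.trans hab))]
  exact div_le_one_of_le₀ hab (ha.trans hab)

namespace ProbabilityTheory

variable {Ω Ω' α β γ : Type*} [MeasurableSpace Ω] [MeasurableSpace Ω'] [MeasurableSpace α]
  [MeasurableSpace β] [MeasurableSpace γ] {μ : Measure Ω} {ν : Measure Ω'}

lemma IndepFun.identDistrib_prodMk [IsFiniteMeasure μ] [IsFiniteMeasure ν]
    {X : Ω → α} {Y : Ω → β} {X' : Ω' → α} {Y' : Ω' → β}
    (hXY : X ⟂ᵢ[μ] Y) (hXY' : X' ⟂ᵢ[ν] Y') (hX : IdentDistrib X X' μ ν)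
    (hY : IdentDistrib Y Y' μ ν) :
    IdentDistrib (fun ω ↦ (X ω, Y ω)) (fun ω ↦ (X' ω, Y' ω)) μ ν where
  aemeasurable_fst := hX.aemeasurable_fst.prodMk hY.aemeasurable_fst
  aemeasurable_snd := hX.aemeasurable_snd.prodMk hY.aemeasurable_snd
  map_eq := by
    rw [hXY.map_prod_eq_prod_map_map hX.aemeasurable_fst hY.aemeasurable_fst,
      hXY'.map_prod_eq_prod_map_map hX.aemeasurable_snd hY.aemeasurable_snd, hX.map_eq, hY.map_eq]

lemma IdentDistrib.integral_le_of_add_le {T T' : Ω → γ} (h : IdentDistrib T T' μ μ)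
    {f g : γ → ℝ} (hf : Measurable f) (hg : Measurable g)
    (hfT : Integrable (fun ω ↦ f (T ω)) μ) (hgT : Integrable (fun ω ↦ g (T ω)) μ)
    (hle : ∀ᵐ ω ∂μ, f (T ω) + f (T' ω) ≤ g (T ω) + g (T' ω)) :
    ∫ ω, f (T ω) ∂μ ≤ ∫ ω, g (T ω) ∂μ := by
  have hf' := h.comp hf
  have hg' := h.comp hg
  have hfT' : Integrable (fun ω ↦ f (T' ω)) μ := hf'.integrable_snd hfT
  have hgT' : Integrable (fun ω ↦ g (T' ω)) μ := hg'.integrable_snd hgT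
  have hsum : ∫ ω, (f (T ω) + f (T' ω)) ∂μ ≤ ∫ ω, (g (T ω) + g (T' ω)) ∂μ :=
    integral_mono_ae (hfT.add hfT') (hgT.add hgT') hle
  rw [integral_add hfT hfT', integral_add hgT hgT'] at hsum
  have hfeq : ∫ ω, f (T ω) ∂μ = ∫ ω, f (T' ω) ∂μ := hf'.integral_eq
  have hgeq : ∫ ω, g (T ω) ∂μ = ∫ ω, g (T' ω) ∂μ := hg'.integral_eq
  linarith

end ProbabilityTheory

theorem no_inversion_laplace_general
    {Ω : Type*} [MeasurableSpace Ω] (μ : Measure Ω) [IsProbabilityMeasure μ]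
    (ε : ℝ) (xa xb : ℝ) (hab : xa ≤ xb)
    (Za Zb S : Ω → ℝ) (hZa : Measurable Za) (hZb : Measurable Zb) (hSmeas : Measurable S)
    (hmapa : μ.map Za = laplaceMeasure (1 / ε))
    (hmapb : μ.map Zb = laplaceMeasure (1 / ε))
    (hindepZ : IndepFun Za Zb μ)
    (hindepS : IndepFun (fun ω => (Za ω, Zb ω)) S μ)
    (hSpos : ∀ᵐ ω ∂μ, 0 < S ω) :
    ∫ ω, max (xa + Za ω) 0 / (max (xa + Za ω) 0 + max (xb + Zb ω) 0 + S ω) ∂μ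
      ≤ ∫ ω, max (xb + Zb ω) 0 / (max (xa + Za ω) 0 + max (xb + Zb ω) 0 + S ω) ∂μ := by
  have hZ : IdentDistrib Za Zb μ μ := ⟨hZa.aemeasurable, hZb.aemeasurable, hmapa.trans hmapb.symm⟩
  have hswap : IdentDistrib (fun ω ↦ ((Za ω, Zb ω), S ω)) (fun ω ↦ ((Zb ω, Za ω), S ω)) μ μ :=
    hindepS.identDistrib_prodMk (hindepS.comp measurable_swap measurable_id)
      (hindepZ.identDistrib_prodMk hindepZ.symm hZ hZ.symm) (.refl hSmeas.aemeasurable)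
  set f : (ℝ × ℝ) × ℝ → ℝ :=
    fun p ↦ max (xa + p.1.1) 0 / (max (xa + p.1.1) 0 + max (xb + p.1.2) 0 + p.2)
  set g : (ℝ × ℝ) × ℝ → ℝ :=
    fun p ↦ max (xb + p.1.2) 0 / (max (xa + p.1.1) 0 + max (xb + p.1.2) 0 + p.2)
  have hf : Measurable f := by fun_prop
  have hg : Measurable g := by fun_prop
  have hT : Measurable fun ω ↦ ((Za ω, Zb ω), S ω) := by fun_prop
  have hshares_le_one : ∀ᵐ ω ∂μ, ∀ u v : ℝ, 0 ≤ u → 0 ≤ v →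
      |u / (u + v + S ω)| ≤ 1 ∧ |v / (u + v + S ω)| ≤ 1 := by
    filter_upwards [hSpos] with ω hs u v hu hv
    exact ⟨abs_div_le_one_of_le hu (by linarith), abs_div_le_one_of_le hv (by linarith)⟩
  refine hswap.integral_le_of_add_le hf hg ?_ ?_ ?_
  · refine .of_bound (hf.comp hT).aestronglyMeasurable 1 ?_
    filter_upwards [hshares_le_one] with ω h
    exact (h _ _ (le_max_right _ _) (le_max_right _ _)).1
  · refine .of_bound (hg.comp hT).aestronglyMeasurable 1 ?_
    filter_upwards [hshares_le_one] with ω h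
    exact (h _ _ (le_max_right _ _) (le_max_right _ _)).2
  · filter_upwards [hSpos] with ω hs
    exact div_add_div_le_div_add_div_of_le (le_max_right _ _) (le_max_right _ _)
      (max_le_max_right 0 (by linarith)) (max_le_max_right 0 (by linarith)) hs

/-- under the Laplace mechanism with rounding of negative counts to
zero, in expectation a district with fewer eligible students receives an allocation
share no larger than that of a district with more eligible students:
`E[Y_a / (Y_a + Y_b + S)] ≤ E[Y_b / (Y_a + Y_b + S)]` where
`Y_a = max (x_a + Z_a) 0`, `Y_b = max (x_b + Z_b) 0`. -/
theorem no_inversion_laplace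
    {Ω : Type*} [MeasurableSpace Ω] (μ : Measure Ω) [IsProbabilityMeasure μ]
    (ε : ℝ) (hε : 0 < ε) (xa xb : ℝ) (hxa : 0 ≤ xa) (hab : xa ≤ xb)
    (Za Zb S : Ω → ℝ) (hZa : Measurable Za) (hZb : Measurable Zb) (hSmeas : Measurable S)
    (hmapa : μ.map Za = laplaceMeasure (1 / ε))
    (hmapb : μ.map Zb = laplaceMeasure (1 / ε))
    (hindepZ : IndepFun Za Zb μ)
    (hindepS : IndepFun (fun ω => (Za ω, Zb ω)) S μ)
    (hS0 : ∀ ω, 0 ≤ S ω) (hSpos : ∀ᵐ ω ∂μ, 0 < S ω) :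
    ∫ ω, max (xa + Za ω) 0 / (max (xa + Za ω) 0 + max (xb + Zb ω) 0 + S ω) ∂μ
      ≤ ∫ ω, max (xb + Zb ω) 0 / (max (xa + Za ω) 0 + max (xb + Zb ω) 0 + S ω) ∂μ :=
  no_inversion_laplace_general μ ε xa xb hab Za Zb S hZa hZb hSmeas hmapa hmapb hindepZ hindepS
    hSpos
end
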